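/- arXiv:1506.08179 — 3 statements merged into one kernel-verified Lean document; each statement's English description precedes it below -/
import Mathlib

section
/- If f : ℝ → ℝ is continuous, f(t) = 0 for t ≤ 0, f(t) > 0 for t > 0, and the function t ↦ f(t)/t is increasing and unbounded on (0,∞), then the primitive F(t) = ∫₀ᵗ f(s) ds satisfies F(t)/t² → ∞ as t → ∞. -/
open Filter Set

theorem stmt0 (f : ℝ → ℝ) (hf : Continuous f)
    (hf0 : ∀ t ≤ (0:ℝ), f t = 0) (hfpos : ∀ t > (0:ℝ), 0 < f t)
    (hmono : StrictMonoOn (fun t => f t / t) (Set.Ioi (0:ℝ)))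
    (hunb : Tendsto (fun t => f t / t) atTop atTop)
    (F : ℝ → ℝ) (hF : ∀ t, F t = ∫ s in (0:ℝ)..t, f s) :
    Tendsto (fun t => F t / t ^ 2) atTop atTop := by
  have hnonneg : ∀ s, 0 ≤ f s := by
    intro s
    rcases le_or_gt s 0 with h | h
    · rw [hf0 s h]
    · exact (hfpos s h).le
  have hmonof : ∀ a b : ℝ, 0 < a → a ≤ b → f a ≤ f b := by
    intro a b ha hab
    rcases eq_or_lt_of_le hab with rfl | h
    · rfl
    · have hb : (0:ℝ) < b := ha.trans h
      have h1 : f a / a ≤ f b / b := (hmono ha hb h).le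
      have h2 : 0 ≤ f b / b := div_nonneg (hnonneg b) hb.le
      calc f a = a * (f a / a) := by field_simp
        _ ≤ a * (f b / b) := by nlinarith
        _ ≤ b * (f b / b) := by nlinarith
        _ = f b := by field_simp
  -- key bound: for t > 0, F t ≥ (t/2) * f (t/2)
  have key : ∀ t : ℝ, 0 < t → (t/2) * f (t/2) ≤ F t := by
    intro t ht
    rw [hF t]
    have hint : ∀ a b : ℝ, IntervalIntegrable f MeasureTheory.volume a b :=
      fun a b => hf.intervalIntegrable a b
    have hsplit : (∫ s in (0:ℝ)..t, f s) =
        (∫ s in (0:ℝ)..(t/2), f s) + ∫ s in (t/2)..t, f s :=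
      (intervalIntegral.integral_add_adjacent_intervals (hint 0 (t/2)) (hint (t/2) t)).symm
    have h1 : 0 ≤ ∫ s in (0:ℝ)..(t/2), f s :=
      intervalIntegral.integral_nonneg (by linarith) (fun x _ => hnonneg x)
    have h2 : (∫ s in (t/2)..t, (f (t/2) : ℝ)) ≤ ∫ s in (t/2)..t, f s := by
      apply intervalIntegral.integral_mono_on (by linarith) intervalIntegrable_const (hint _ _)
      intro x hx
      exact hmonof (t/2) x (by linarith) hx.1
    rw [intervalIntegral.integral_const] at h2
    have : (t - t/2) • f (t/2) = (t/2) * f (t/2) := by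
      rw [smul_eq_mul]; ring_nf
    rw [this] at h2
    linarith
  -- lower bound function
  have hL : Tendsto (fun t : ℝ => (f (t/2) / (t/2)) / 4) atTop atTop := by
    have h1 : Tendsto (fun t : ℝ => t/2) atTop atTop :=
      tendsto_id.atTop_div_const (by norm_num)
    exact (hunb.comp h1).atTop_div_const (by norm_num)
  apply tendsto_atTop_mono' atTop _ hL
  filter_upwards [eventually_gt_atTop (0:ℝ)] with t ht
  have hk := key t ht
  have ht2 : (0:ℝ) < t/2 := by linarith
  have : f (t/2) / (t/2) / 4 = ((t/2) * f (t/2)) / t^2 := by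
    field_simp; ring
  rw [this]
  apply div_le_div_of_nonneg_right hk (by positivity) |>.trans_eq rfl
end

section
/- If f(t)/t is increasing on (0,∞) and f(t)=0 for t≤0, then for the primitive F(t) = ∫₀ᵗ f(s)ds and any 0 < t ≤ 1 and s > 0: f(ts)·(ts) - 2F(ts) ≤ f(s)·s - 2F(s). In particular the map s ↦ f(s)s - 2F(s) is nondecreasing on (0,∞). -/
theorem stmt12 (f : ℝ → ℝ) (hf : Continuous f)
    (hf0 : ∀ t ≤ (0:ℝ), f t = 0) (hfpos : ∀ t > (0:ℝ), 0 < f t)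
    (hmono : StrictMonoOn (fun t => f t / t) (Set.Ioi (0:ℝ)))
    (F : ℝ → ℝ) (hF : ∀ t, F t = ∫ s in (0:ℝ)..t, f s) :
    (∀ s > (0:ℝ), ∀ t : ℝ, 0 < t → t ≤ 1 →
        f (t * s) * (t * s) - 2 * F (t * s) ≤ f s * s - 2 * F s) ∧
      MonotoneOn (fun s => f s * s - 2 * F s) (Set.Ioi (0:ℝ)) := by
  have key : ∀ a b : ℝ, 0 < a → a ≤ b →
      f a * a - 2 * F a ≤ f b * b - 2 * F b := by
    intro a b ha hab
    have hb : 0 < b := lt_of_lt_of_le ha hab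
    have hFdiff : F b - F a = ∫ u in a..b, f u := by
      rw [hF, hF]
      rw [← intervalIntegral.integral_interval_sub_left
        (hf.intervalIntegrable 0 b) (hf.intervalIntegrable 0 a)]
    have hm : MonotoneOn (fun t => f t / t) (Set.Ioi (0:ℝ)) := hmono.monotoneOn
    have hbound : (∫ u in a..b, f u) ≤ ∫ u in a..b, (f b / b) * u := by
      apply intervalIntegral.integral_mono_on hab (hf.intervalIntegrable a b)
        ((continuous_const.mul continuous_id).intervalIntegrable a b)
      intro u hu
      have hu0 : 0 < u := lt_of_lt_of_le ha hu.1
      have hle : f u / u ≤ f b / b := hm (Set.mem_Ioi.mpr hu0) (Set.mem_Ioi.mpr hb) hu.2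
      have : f u / u * u ≤ f b / b * u := mul_le_mul_of_nonneg_right hle hu0.le
      rwa [div_mul_cancel₀ _ hu0.ne'] at this
    have hcalc : (∫ u in a..b, (f b / b) * u) = (f b / b) * ((b ^ 2 - a ^ 2) / 2) := by
      rw [intervalIntegral.integral_const_mul, integral_id]
    have h1 : f a / a ≤ f b / b := hm (Set.mem_Ioi.mpr ha) (Set.mem_Ioi.mpr hb) hab
    have ea : f a / a * a = f a := div_mul_cancel₀ _ ha.ne'
    have eb : f b / b * b = f b := div_mul_cancel₀ _ hb.ne'
    rw [hcalc] at hbound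
    nlinarith [mul_le_mul_of_nonneg_left h1 (sq_nonneg a), sq_nonneg a, sq_nonneg b]
  constructor
  · intro s hs t ht ht1
    exact key (t * s) s (mul_pos ht hs) (by nlinarith)
  · intro a ha b hb hab
    exact key a b ha hab
end

section
/- If f(t)/t is increasing on (0,∞), then its primitive F satisfies: F(s)/s² is increasing on (0,∞), and consequently for any measurable u ≥ 0 and any λ ≥ 1, F(λ u(z)) ≥ λ² F(u(z)) pointwise; hence K(λu)(z) ≥ λ² K(u)(z) where K(v) = |·|^{-γ}*F(v). -/
/-!
Write `g(t) = f(t)/t`, which is strictly increasing. For `0 < a < b`, comparing `f` with the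
linear function `t ↦ g(a) t` gives `F(a) < g(a) a²/2` on `(0, a)` and
`F(b) - F(a) > g(a) (b² - a²)/2` on `(a, b)`, hence
`a² F(b) - b² F(a) > (b² - a²) (g(a) a²/2 - F(a)) > 0`, i.e. `F(s)/s²` is strictly increasing.
Comparing `F(s)/s²` at `s = t` and `s = λt` yields `F(λt) ≥ λ² F(t)`, and this pointwise bound
passes through the integral defining `K`.
-/

open MeasureTheory ENNReal

/-- Nonlocal term as a lower integral:
`K(v)(z) = ∫ F(v(z')) |z - z'|^{-γ} dz'`. -/
noncomputable def Klin {N : ℕ} (γ : ℝ) (F : ℝ → ℝ)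
    (v : EuclideanSpace ℝ (Fin N) → ℝ) (z : EuclideanSpace ℝ (Fin N)) : ℝ≥0∞ :=
  ∫⁻ z', ENNReal.ofReal (F (v z') * ‖z - z'‖ ^ (-γ))

open Set

section LinearComparison

variable {f : ℝ → ℝ} {a b c : ℝ}

theorem mul_sq_sub_sq_div_two_lt_integral (hf : IntervalIntegrable f volume a b) (hab : a < b)
    (h : ∀ t ∈ Ioo a b, c * t < f t) :
    c * ((b ^ 2 - a ^ 2) / 2) < ∫ t in a..b, f t := by
  have hlin : IntervalIntegrable (fun t => c * t) volume a b :=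
    (continuous_const.mul continuous_id).intervalIntegrable a b
  have hpos : 0 < ∫ t in a..b, (f t - c * t) :=
    intervalIntegral.intervalIntegral_pos_of_pos_on (hf.sub hlin)
      (fun t ht => sub_pos.2 (h t ht)) hab
  rw [intervalIntegral.integral_sub hf hlin, intervalIntegral.integral_const_mul,
    integral_id] at hpos
  linarith

theorem integral_lt_mul_sq_sub_sq_div_two (hf : IntervalIntegrable f volume a b) (hab : a < b)
    (h : ∀ t ∈ Ioo a b, f t < c * t) :
    ∫ t in a..b, f t < c * ((b ^ 2 - a ^ 2) / 2) := by
  have := mul_sq_sub_sq_div_two_lt_integral (f := fun t => -f t) (c := -c) hf.neg hab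
    fun t ht => by linarith [h t ht]
  rw [intervalIntegral.integral_neg] at this
  linarith

end LinearComparison

theorem strictMonoOn_integral_div_sq {f : ℝ → ℝ} (hf : Continuous f)
    (hmono : StrictMonoOn (fun t => f t / t) (Ioi 0)) :
    StrictMonoOn (fun s => (∫ t in (0:ℝ)..s, f t) / s ^ 2) (Ioi 0) := by
  intro a (ha : 0 < a) b (hb : 0 < b) hab
  set g := f a / a
  have below : ∫ t in (0:ℝ)..a, f t < g * ((a ^ 2 - 0 ^ 2) / 2) :=
    integral_lt_mul_sq_sub_sq_div_two (hf.intervalIntegrable 0 a) ha fun t ht =>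
      (div_lt_iff₀ ht.1).1 (hmono ht.1 ha ht.2)
  have above : g * ((b ^ 2 - a ^ 2) / 2) < ∫ t in a..b, f t :=
    mul_sq_sub_sq_div_two_lt_integral (hf.intervalIntegrable a b) hab fun t ht =>
      (lt_div_iff₀ (ha.trans ht.1)).1 (hmono ha (ha.trans ht.1) ht.1)
  have hsq : a ^ 2 < b ^ 2 := pow_lt_pow_left₀ hab ha.le two_ne_zero
  show (∫ t in (0:ℝ)..a, f t) / a ^ 2 < (∫ t in (0:ℝ)..b, f t) / b ^ 2
  rw [← intervalIntegral.integral_add_adjacent_intervals (hf.intervalIntegrable 0 a)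
    (hf.intervalIntegrable a b), div_lt_div_iff₀ (by positivity) (by positivity)]
  nlinarith

theorem mul_sq_le_of_monotoneOn_div_sq {F : ℝ → ℝ} (hF0 : F 0 = 0)
    (hmono : MonotoneOn (fun s => F s / s ^ 2) (Ioi 0)) {t lam : ℝ} (ht : 0 ≤ t)
    (hlam : 1 ≤ lam) : lam ^ 2 * F t ≤ F (lam * t) := by
  rcases ht.eq_or_lt with rfl | ht
  · simp [hF0]
  have hle : F t / t ^ 2 ≤ F (lam * t) / (lam * t) ^ 2 :=
    hmono ht (by positivity : 0 < lam * t) (le_mul_of_one_le_left ht.le hlam)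
  rwa [div_le_div_iff₀ (by positivity) (by positivity), mul_pow, ← mul_assoc,
    mul_comm (F t), mul_le_mul_iff_of_pos_right (by positivity)] at hle

theorem ofReal_mul_Klin_le {N : ℕ} {γ c : ℝ} {F : ℝ → ℝ}
    {u v : EuclideanSpace ℝ (Fin N) → ℝ} (hc : 0 ≤ c) (h : ∀ z, c * F (u z) ≤ F (v z))
    (z : EuclideanSpace ℝ (Fin N)) : ENNReal.ofReal c * Klin γ F u z ≤ Klin γ F v z := by
  rw [Klin, Klin, ← lintegral_const_mul' _ _ ofReal_ne_top]
  refine lintegral_mono fun z' => ?_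
  rw [← ofReal_mul hc, ← mul_assoc]
  exact ofReal_le_ofReal
    (mul_le_mul_of_nonneg_right (h z') (Real.rpow_nonneg (norm_nonneg _) _))

theorem stmt13_general (N : ℕ) (γ : ℝ)
    (f F : ℝ → ℝ) (hf : Continuous f)
    (hmono : StrictMonoOn (fun t => f t / t) (Set.Ioi (0:ℝ)))
    (hF : ∀ t, F t = ∫ s in (0:ℝ)..t, f s) :
    StrictMonoOn (fun s => F s / s ^ 2) (Set.Ioi (0:ℝ)) ∧
      ∀ u : EuclideanSpace ℝ (Fin N) → ℝ, (∀ z, 0 ≤ u z) →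
        ∀ lam : ℝ, 1 ≤ lam →
          (∀ z, lam ^ 2 * F (u z) ≤ F (lam * u z)) ∧
          (∀ z, ENNReal.ofReal (lam ^ 2) * Klin γ F u z ≤
            Klin γ F (fun z' => lam * u z') z) := by
  obtain rfl : F = fun t => ∫ s in (0:ℝ)..t, f s := funext hF
  have hsm := strictMonoOn_integral_div_sq hf hmono
  have hscale : ∀ t, 0 ≤ t → ∀ lam : ℝ, 1 ≤ lam →
      lam ^ 2 * (∫ s in (0:ℝ)..t, f s) ≤ ∫ s in (0:ℝ)..lam * t, f s :=
    fun t ht lam hlam =>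
      mul_sq_le_of_monotoneOn_div_sq intervalIntegral.integral_same hsm.monotoneOn ht hlam
  refine ⟨hsm, fun u hu lam hlam => ⟨fun z => hscale _ (hu z) lam hlam, ?_⟩⟩
  exact ofReal_mul_Klin_le (sq_nonneg lam) fun z => hscale _ (hu z) lam hlam

theorem stmt13 (N : ℕ) (hN : 1 ≤ N) (γ : ℝ) (hγ0 : 0 < γ) (hγN : γ < N)
    (f F : ℝ → ℝ) (hf : Continuous f)
    (hf0 : ∀ t ≤ (0:ℝ), f t = 0) (hfpos : ∀ t > (0:ℝ), 0 < f t)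
    (hmono : StrictMonoOn (fun t => f t / t) (Set.Ioi (0:ℝ)))
    (hF : ∀ t, F t = ∫ s in (0:ℝ)..t, f s) :
    StrictMonoOn (fun s => F s / s ^ 2) (Set.Ioi (0:ℝ)) ∧
      ∀ u : EuclideanSpace ℝ (Fin N) → ℝ, (∀ z, 0 ≤ u z) →
        ∀ lam : ℝ, 1 ≤ lam →
          (∀ z, lam ^ 2 * F (u z) ≤ F (lam * u z)) ∧
          (∀ z, ENNReal.ofReal (lam ^ 2) * Klin γ F u z ≤
            Klin γ F (fun z' => lam * u z') z) :=
  stmt13_general N γ f F hf hmono hF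
end
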